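/- If u² is a factor of the Thue–Morse word t, then u equals μⁿ(a), μⁿ(b), μⁿ(aba), or μⁿ(bab) for some n ≥ 0. -/

import Mathlib

/-!
Since `tm (2n) = tm n` and `tm (2n+1) = !tm n`, two equal adjacent letters of `t` always
start at an odd position. Hence `t` is overlap-free: an overlap of even period halves under `μ⁻¹`,
while one of odd period either contains two equal adjacent letters, whose translate by the period
would start at a position of the wrong parity, or contains an alternating factor of length 5,
an overlap of period 2.

Now let `uu` occur at position `i`. If `u` contains two equal adjacent letters, the same argument
shows `|u|` even; `i` is then even too, since otherwise the letter before `uu` extends it to an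
overlap, so `u = μ(v)` with `vv` a factor of `t` and we induct. Otherwise `u` alternates, and
overlap-freeness leaves only `a, b, ab, ba, aba, bab`.
-/

/-- Alphabet: `false` = a, `true` = b. The Thue–Morse morphism μ(a)=ab, μ(b)=ba. -/
def mu (w : List Bool) : List Bool := w.flatMap (fun x => [x, !x])

/-- The Thue–Morse word: `tm n` is the parity of the binary digit sum of `n`. -/
def tm (n : ℕ) : Bool := (Nat.digits 2 n).sum % 2 == 1

/-- `w` is a (finite) factor/segment of the Thue–Morse word. -/
def IsFactorTM (w : List Bool) : Prop :=
  ∃ i : ℕ, w = (List.range w.length).map (fun k => tm (i + k))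

/-- Apply the endomorphism of {a,b}⁺ determined by a ↦ fa, b ↦ fb to a word. -/
def subst (fa fb : List Bool) (w : List Bool) : List Bool :=
  w.flatMap (fun x => if x then fb else fa)

theorem tm_two_mul (n : ℕ) : tm (2 * n) = tm n := by
  rcases Nat.eq_zero_or_pos n with rfl | hn
  · rfl
  · rw [tm, Nat.digits_def' (by norm_num) (by omega)]
    simp [tm]

theorem tm_two_mul_add_one (n : ℕ) : tm (2 * n + 1) = !tm n := by
  rw [tm, Nat.digits_def' (by norm_num) (by omega), show (2 * n + 1) / 2 = n by omega, tm]
  rcases Nat.mod_two_eq_zero_or_one (Nat.digits 2 n).sum with h | h <;> simp [Nat.add_mod, h]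

theorem tm_two_mul_add_one_eq_not (n : ℕ) : tm (2 * n + 1) = !tm (2 * n) := by
  rw [tm_two_mul, tm_two_mul_add_one]

theorem odd_of_tm_eq_tm_succ {j : ℕ} (h : tm j = tm (j + 1)) : Odd j := by
  by_contra hj
  obtain ⟨a, rfl⟩ := Nat.not_odd_iff_even.mp hj
  rw [← two_mul, tm_two_mul_add_one_eq_not] at h
  exact (Bool.eq_not_self _).mp h

def HasPeriodTM (i n p : ℕ) : Prop := ∀ k, k + p < n → tm (i + k) = tm (i + k + p)

def tmFactor (i m : ℕ) : List Bool := (List.range m).map (fun k => tm (i + k))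

theorem mu_tmFactor (i m : ℕ) : mu (tmFactor i m) = tmFactor (2 * i) (2 * m) := by
  induction m with
  | zero => rfl
  | succ m ih =>
    rw [show 2 * (m + 1) = 2 * m + 1 + 1 by ring]
    simp only [tmFactor, List.range_succ, List.map_append, List.map_cons, List.map_nil] at ih ⊢
    rw [mu, List.flatMap_append, ← mu, ih]
    simp [show 2 * i + (2 * m + 1) = 2 * (i + m) + 1 by ring,
      show 2 * i + 2 * m = 2 * (i + m) by ring, tm_two_mul, tm_two_mul_add_one]

theorem HasPeriodTM.half {i n q : ℕ} (h : HasPeriodTM i n (2 * q)) :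
    HasPeriodTM (i / 2) ((n + 1) / 2) q := by
  intro s hs
  have hk := h (2 * s) (by omega)
  obtain ⟨a, rfl | rfl⟩ := Nat.even_or_odd' i
  · rw [Nat.mul_div_cancel_left a two_pos]
    rwa [← mul_add, ← mul_add, tm_two_mul, tm_two_mul] at hk
  · rw [show (2 * a + 1) / 2 = a by omega]
    rwa [show 2 * a + 1 + 2 * s = 2 * (a + s) + 1 by ring,
      show 2 * (a + s) + 1 + 2 * q = 2 * (a + s + q) + 1 by ring, tm_two_mul_add_one,
      tm_two_mul_add_one, Bool.not_inj_iff] at hk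

theorem HasPeriodTM.even_of_tm_eq_tm_succ {i n p k : ℕ} (h : HasPeriodTM i n p)
    (hk : k + 1 + p < n) (heq : tm (i + k) = tm (i + k + 1)) : Even p := by
  have hshift : tm (i + k + p) = tm (i + k + p + 1) := by
    rw [← h k (by omega), heq, show i + k + p + 1 = i + (k + 1) + p by ring, ← h (k + 1) hk]
    rfl
  obtain ⟨r, hr⟩ := odd_of_tm_eq_tm_succ heq
  obtain ⟨s, hs⟩ := odd_of_tm_eq_tm_succ hshift
  exact ⟨s - r, by omega⟩

theorem hasPeriodTM_two_of_alternating {i n : ℕ}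
    (h : ∀ k, k + 1 < n → tm (i + k) ≠ tm (i + k + 1)) : HasPeriodTM i n 2 := by
  intro k hk
  have h₁ := h k (by omega)
  have h₂ := h (k + 1) (by omega)
  rw [show i + (k + 1) = i + k + 1 by ring] at h₂
  rw [Bool.eq_not_iff.mpr h₂.symm, Bool.eq_not_iff.mpr h₁.symm, Bool.not_not]

theorem HasPeriodTM.extend_left {a n q : ℕ} (h : HasPeriodTM (2 * a + 1) n (2 * q))
    (hn : 2 * q < n) : HasPeriodTM (2 * a) (n + 1) (2 * q) := by
  rintro (_ | k) hk
  · have h₀ := h 0 (by omega)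
    rw [add_zero, show 2 * a + 1 + 2 * q = 2 * (a + q) + 1 by ring, tm_two_mul_add_one_eq_not,
      tm_two_mul_add_one_eq_not, Bool.not_inj_iff] at h₀
    rwa [add_zero, ← mul_add]
  · rw [show 2 * a + (k + 1) = 2 * a + 1 + k by ring]
    exact h k (by omega)

theorem not_hasPeriodTM_of_two_mul_lt {p : ℕ} (hp : 0 < p) {i n : ℕ} (hn : 2 * p < n) :
    ¬ HasPeriodTM i n p := by
  induction p using Nat.strong_induction_on generalizing i n with
  | _ p ih =>
  intro h
  obtain ⟨q, rfl | rfl⟩ := Nat.even_or_odd' p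
  · exact ih q (by omega) (by omega) (by omega) h.half
  rcases Nat.eq_zero_or_pos q with rfl | hq
  · obtain ⟨r, hr⟩ := odd_of_tm_eq_tm_succ (j := i) (by simpa using h 0 (by omega))
    obtain ⟨s, hs⟩ := odd_of_tm_eq_tm_succ (j := i + 1) (by simpa using h 1 (by omega))
    omega
  by_cases hpair : ∃ k < 2 * q + 1, tm (i + k) = tm (i + k + 1)
  · obtain ⟨k, hk, heq⟩ := hpair
    exact Nat.not_even_two_mul_add_one q (h.even_of_tm_eq_tm_succ (by omega) heq)
  push Not at hpair
  have halt : ∀ k, k + 1 < 5 → tm (i + k) ≠ tm (i + k + 1) := by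
    intro k hk
    rcases lt_or_ge k (2 * q + 1) with hkp | hkp
    · exact hpair k hkp
    obtain ⟨j, rfl⟩ := Nat.exists_eq_add_of_le hkp
    rw [show i + (2 * q + 1 + j) = i + j + (2 * q + 1) by ring, ← h j (by omega),
      show i + j + (2 * q + 1) + 1 = i + (j + 1) + (2 * q + 1) by ring, ← h (j + 1) (by omega)]
    exact hpair j (by omega)
  exact ih 2 (by omega) two_pos (by norm_num) (hasPeriodTM_two_of_alternating halt)

def IsMuIterateOfBase (u : List Bool) : Prop :=
  ∃ n : ℕ, u = mu^[n] [false] ∨ u = mu^[n] [true] ∨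
    u = mu^[n] [false, true, false] ∨ u = mu^[n] [true, false, true]

theorem IsMuIterateOfBase.mu {u : List Bool} (h : IsMuIterateOfBase u) :
    IsMuIterateOfBase (mu u) := by
  obtain ⟨n, hn⟩ := h
  refine ⟨n + 1, ?_⟩
  simp only [Function.iterate_succ_apply']
  rcases hn with rfl | rfl | rfl | rfl <;> simp

theorem isMuIterateOfBase_singleton (b : Bool) : IsMuIterateOfBase [b] := by
  cases b
  exacts [⟨0, by simp⟩, ⟨0, by simp⟩]

theorem isMuIterateOfBase_pair (b : Bool) : IsMuIterateOfBase [b, !b] :=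
  (isMuIterateOfBase_singleton b).mu

theorem isMuIterateOfBase_triple (b : Bool) : IsMuIterateOfBase [b, !b, b] := by
  cases b
  exacts [⟨0, by simp⟩, ⟨0, by simp⟩]

theorem isMuIterateOfBase_of_hasPeriodTM {m : ℕ} (hm : 0 < m) {i : ℕ}
    (h : HasPeriodTM i (2 * m) m) : IsMuIterateOfBase (tmFactor i m) := by
  induction m using Nat.strong_induction_on generalizing i with
  | _ m ih =>
  by_cases hpair : ∃ k, k + 1 < m ∧ tm (i + k) = tm (i + k + 1)
  · obtain ⟨k, hk, heq⟩ := hpair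
    obtain ⟨q, rfl⟩ := (h.even_of_tm_eq_tm_succ (by omega) heq).two_dvd
    obtain ⟨a, rfl | rfl⟩ := Nat.even_or_odd' i
    · rw [← mu_tmFactor]
      have hhalf := h.half
      rw [Nat.mul_div_cancel_left a two_pos, show (2 * (2 * q) + 1) / 2 = 2 * q by omega] at hhalf
      exact (ih q (by omega) (by omega) hhalf).mu
    · exact absurd (h.extend_left (by omega)) (not_hasPeriodTM_of_two_mul_lt hm (by omega))
  push Not at hpair
  have h₂ : HasPeriodTM i m 2 := hasPeriodTM_two_of_alternating hpair
  rcases lt_or_ge m 4 with hm4 | hm4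
  · interval_cases m
    · exact isMuIterateOfBase_singleton (tm i)
    all_goals have h₁ : tm (i + 1) = !tm i := Bool.eq_not_iff.mpr (hpair 0 (by omega)).symm
    · rw [show tmFactor i 2 = [tm i, !tm i] by simp [tmFactor, List.range_succ, h₁]]
      exact isMuIterateOfBase_pair (tm i)
    · have h₃ : tm (i + 2) = tm i := (h₂ 0 (by omega)).symm
      rw [show tmFactor i 3 = [tm i, !tm i, tm i] by simp [tmFactor, List.range_succ, h₁, h₃]]
      exact isMuIterateOfBase_triple (tm i)
  -- the first five letters of `uu` alternate
  refine absurd (fun k hk => ?_)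
    (not_hasPeriodTM_of_two_mul_lt (i := i) two_pos (show 2 * 2 < 5 by norm_num))
  rcases lt_or_ge (k + 2) m with hkm | hkm
  · exact h₂ k hkm
  obtain ⟨rfl, rfl⟩ : k = 2 ∧ m = 4 := by omega
  rw [show i + 2 + 2 = i + 0 + 4 by ring, ← h 0 (by omega)]
  exact (h₂ 0 (by omega)).symm

theorem IsFactorTM.append_self {u : List Bool} (h : IsFactorTM (u ++ u)) :
    ∃ i, u = tmFactor i u.length ∧ HasPeriodTM i (2 * u.length) u.length := by
  obtain ⟨i, hi⟩ := h
  rw [List.length_append, List.range_add, List.map_append] at hi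
  obtain ⟨hfst, hsnd⟩ := List.append_inj hi (by simp)
  refine ⟨i, hfst, fun k hk => ?_⟩
  have hk' : k < u.length := by omega
  have := congrArg (·[k]?) (hfst.symm.trans hsnd)
  simp only [List.length_map, List.length_range, hk', getElem?_pos, List.getElem_map,
    List.getElem_range, List.map_map, Function.comp_apply, Option.some.injEq] at this
  rwa [add_assoc, add_comm k]

/-- If u² is a factor of t, then u is μⁿ(a), μⁿ(b), μⁿ(aba), or μⁿ(bab). -/
theorem square_factor (u : List Bool) (hu : u ≠ []) (h : IsFactorTM (u ++ u)) :
    ∃ n : ℕ, u = mu^[n] [false] ∨ u = mu^[n] [true] ∨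
      u = mu^[n] [false, true, false] ∨ u = mu^[n] [true, false, true] := by
  obtain ⟨i, hu_eq, hper⟩ := h.append_self
  rw [hu_eq]
  exact isMuIterateOfBase_of_hasPeriodTM (List.length_pos_iff.mpr hu) hper
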